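/- arXiv:2507.06451 — 3 statements merged into one kernel-verified Lean document; each statement's English description precedes it below -/
import Mathlib

section
/- Suppose the set of p-values P_{A(α)} = { p_{θ₀} : θ₀ ∈ A(α) } is nonempty, closed, and pathwise-connected. Then the minimally adjusted p-value p^adj_min = argmin_{p ∈ P_{A(α)}} |p* − p|, with probability at least 1 − α asymptotically, is no worse than the unadjusted p-value p*: lim P( |p^adj_min − p^truth| ≤ |p* − p^truth| | H_0 ) ≥ 1 − α as min{N'_0, N'_1} → ∞, where p^truth = p_θ is the vaccine-responder p-value under H_0 computed at the true misclassification rates θ. -/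
open MeasureTheory Filter Set Topology

private lemma key_nearest {S : Set ℝ} (h : S.OrdConnected) {c t m : ℝ}
    (ht : t ∈ S) (hm : m ∈ S) (hopt : ∀ x ∈ S, |c - m| ≤ |c - x|) :
    |m - t| ≤ |c - t| := by
  rcases le_total t m with htm | htm
  · rcases le_total c t with h1 | h1
    · have h2 := hopt t ht
      rw [abs_of_nonpos (by linarith), abs_of_nonpos (by linarith)] at h2
      rw [abs_of_nonneg (by linarith), abs_of_nonpos (by linarith)]
      linarith
    · rcases le_total c m with h2 | h2
      · have hc : c ∈ S := h.out ht hm ⟨h1, h2⟩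
        have h3 := hopt c hc
        rw [sub_self, abs_zero] at h3
        have : c = m := by
          have h4 := abs_le.mp (show |c - m| ≤ 0 from h3)
          linarith [h4.1, h4.2]
        subst this
        exact le_refl _
      · rw [abs_of_nonneg (by linarith), abs_of_nonneg (by linarith)]
        linarith
  · rcases le_total t c with h1 | h1
    · have h2 := hopt t ht
      rw [abs_of_nonneg (by linarith), abs_of_nonneg (by linarith)] at h2
      rw [abs_of_nonpos (by linarith), abs_of_nonneg (by linarith)]
      linarith
    · rcases le_total m c with h2 | h2
      · have hc : c ∈ S := h.out hm ht ⟨h2, h1⟩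
        have h3 := hopt c hc
        rw [sub_self, abs_zero] at h3
        have : c = m := by
          have h4 := abs_le.mp (show |c - m| ≤ 0 from h3)
          linarith [h4.1, h4.2]
        subst this
        exact le_refl _
      · rw [abs_of_nonpos (by linarith), abs_of_nonpos (by linarith)]
        linarith

/-- **The minimally adjusted p-value is asymptotically no worse than the unadjusted
p-value (Theorem 2).**
Let `θ` be the true misclassification rates and `p^truth = p θ` the vaccine-responder
p-value under `H₀` computed at `θ`. Suppose for each `n, ω` the set of p-values
`P_A = {p θ₀ n ω : θ₀ ∈ A n ω}` is nonempty, closed and pathwise-connected, `pmin n ω`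
is a point of `P_A` closest to the unadjusted p-value `p 0 n ω`, and the confidence
sets `A n ω` have asymptotic coverage at least `1 - α`. Then
`lim P(|pmin - p^truth| ≤ |p* - p^truth| , H₀) ≥ 1 - α`. -/
theorem minimally_adjusted_pvalue_no_worse_than_unadjusted
    {Ω : Type*} [MeasurableSpace Ω] (P : Measure Ω) [IsProbabilityMeasure P]
    (α : ℝ) (hα : α ∈ Set.Ioo (0 : ℝ) 1)
    -- the vaccine-responder p-values, indexed by candidate misclassification rates
    (p : (Fin 4 → ℝ) → ℕ → Ω → ℝ)
    (hp01 : ∀ θ₀ n ω, p θ₀ n ω ∈ Set.Icc (0 : ℝ) 1)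
    -- the true misclassification rates
    (θ : Fin 4 → ℝ) (hθ : θ ∈ Set.Icc (0 : (Fin 4 → ℝ)) 1)
    -- the confidence sets from the paired control data
    (A : ℕ → Ω → Set (Fin 4 → ℝ))
    -- the sets of p-values compatible with the paired control data are
    -- nonempty, closed and pathwise-connected
    (hSne : ∀ n ω, ((fun θ₀ => p θ₀ n ω) '' A n ω).Nonempty)
    (hSclosed : ∀ n ω, IsClosed ((fun θ₀ => p θ₀ n ω) '' A n ω))
    (hSconn : ∀ n ω, IsPathConnected ((fun θ₀ => p θ₀ n ω) '' A n ω))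
    -- asymptotic coverage of the confidence set at level `1 - α` (Proposition 1)
    (hcoverage : (1 - α) ≤ atTop.liminf (fun n => (P {ω | θ ∈ A n ω}).toReal))
    -- the minimally adjusted p-value: the element of `P_A` closest to the
    -- unadjusted p-value `p 0` (misclassification rates set to zero)
    (pmin : ℕ → Ω → ℝ)
    (hpminMem : ∀ n ω, pmin n ω ∈ (fun θ₀ => p θ₀ n ω) '' A n ω)
    (hpminOpt : ∀ n ω, ∀ x ∈ (fun θ₀ => p θ₀ n ω) '' A n ω,
      |p 0 n ω - pmin n ω| ≤ |p 0 n ω - x|) :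
    (1 - α) ≤ atTop.liminf
      (fun n => (P {ω | |pmin n ω - p θ n ω| ≤ |p 0 n ω - p θ n ω|}).toReal) := by
  have hmono : ∀ n, (P {ω | θ ∈ A n ω}).toReal ≤
      (P {ω | |pmin n ω - p θ n ω| ≤ |p 0 n ω - p θ n ω|}).toReal := by
    intro n
    apply ENNReal.toReal_le_toReal (measure_ne_top P _) (measure_ne_top P _) |>.mpr
    apply measure_mono
    intro ω hω
    have hconn : ((fun θ₀ => p θ₀ n ω) '' A n ω).OrdConnected :=
      ((hSconn n ω).isConnected.isPreconnected).ordConnected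
    exact key_nearest hconn (Set.mem_image_of_mem _ hω) (hpminMem n ω) (hpminOpt n ω)
  refine le_trans hcoverage (liminf_le_liminf (Filter.Eventually.of_forall hmono) ?_ ?_)
  · exact isBoundedUnder_of ⟨0, fun n => ENNReal.toReal_nonneg⟩
  · exact (isBoundedUnder_of ⟨1, fun n =>
      ENNReal.toReal_le_of_le_ofReal zero_le_one (by simpa using prob_le_one)⟩
      : IsBoundedUnder (· ≤ ·) atTop _).isCoboundedUnder_ge
end

section
/- (Finite-sample Berger–Boos inequality) Let (Ω, F, P) be a probability space, Θ a set, p : Θ → Ω → [0,1] a family of random variables, A : Ω → Set Θ a random set, θ₀ ∈ Θ, and 0 < α' < α < 1. Define p_max(ω) = sup{ p(θ, ω) : θ ∈ A(ω) } + α' (the supremum taken over a nonempty A(ω) with values in [0,1]). Then the event { p_max ≤ α } is contained in { p(θ₀, ·) ≤ α − α' } ∪ { θ₀ ∉ A(·) }, and consequently (assuming the relevant events are measurable) P( p_max ≤ α ) ≤ P( p(θ₀, ·) ≤ α − α' ) + P( θ₀ ∉ A(·) ). -/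
open MeasureTheory Set

/-- **Finite-sample Berger–Boos inequality.**
If `p θ` are `[0,1]`-valued p-values, `A ω` is a nonempty data-dependent confidence set,
`0 < α' < α < 1`, and `pmax ω = sSup {p θ ω : θ ∈ A ω} + α'`, then the event
`{pmax ≤ α}` is contained in `{p θ₀ ≤ α - α'} ∪ {θ₀ ∉ A}`, and hence
`P(pmax ≤ α) ≤ P(p θ₀ ≤ α - α') + P(θ₀ ∉ A)`. -/
theorem berger_boos_event_inclusion
    {Ω : Type*} [MeasurableSpace Ω] (P : Measure Ω) [IsProbabilityMeasure P]
    {Θ : Type*} (p : Θ → Ω → ℝ) (hp01 : ∀ θ ω, p θ ω ∈ Icc (0 : ℝ) 1)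
    (A : Ω → Set Θ) (hAne : ∀ ω, (A ω).Nonempty) (θ₀ : Θ)
    (α α' : ℝ) (hα' : 0 < α') (hα'α : α' < α) (hα : α < 1)
    (pmax : Ω → ℝ)
    (hpmax : ∀ ω, pmax ω = sSup ((fun θ => p θ ω) '' A ω) + α') :
    {ω | pmax ω ≤ α} ⊆ {ω | p θ₀ ω ≤ α - α'} ∪ {ω | θ₀ ∉ A ω} ∧
      P {ω | pmax ω ≤ α} ≤ P {ω | p θ₀ ω ≤ α - α'} + P {ω | θ₀ ∉ A ω} := by
  have hsub : {ω | pmax ω ≤ α} ⊆ {ω | p θ₀ ω ≤ α - α'} ∪ {ω | θ₀ ∉ A ω} := by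
    intro ω hω
    by_cases hmem : θ₀ ∈ A ω
    · left
      have hbdd : BddAbove ((fun θ => p θ ω) '' A ω) := by
        refine ⟨1, ?_⟩
        rintro x ⟨θ, _, rfl⟩
        exact (hp01 θ ω).2
      have hle : p θ₀ ω ≤ sSup ((fun θ => p θ ω) '' A ω) :=
        le_csSup hbdd ⟨θ₀, hmem, rfl⟩
      have : sSup ((fun θ => p θ ω) '' A ω) + α' ≤ α := by
        rw [← hpmax ω]; exact hω
      simp only [mem_setOf_eq]
      linarith
    · right; exact hmem
  exact ⟨hsub, le_trans (measure_mono hsub) (measure_union_le _ _)⟩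
end

section
/- (Finite-sample guarantee for the minimally adjusted p-value) Let (Ω, F, P) be a probability space, Θ a set, p : Θ → Ω → [0,1] a family of random variables, A : Ω → Set Θ a random set, and θ ∈ Θ the true parameter. Suppose that for every ω, the set P_A(ω) = { p(θ₀, ω) : θ₀ ∈ A(ω) } is nonempty, closed, and pathwise-connected, and let p_min(ω) be a point of P_A(ω) minimizing |p(𝟎, ω) − x| over x ∈ P_A(ω), where p(𝟎, ·) = p* is the unadjusted p-value. Then the event { θ ∈ A(·) } is contained in the event { |p_min − p(θ, ·)| ≤ |p* − p(θ, ·)| }, and consequently (assuming measurability) P( |p_min − p(θ, ·)| ≤ |p* − p(θ, ·)| ) ≥ P( θ ∈ A(·) ). -/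
open MeasureTheory Set

/-!
The p-values `S = {p θ₀ ω : θ₀ ∈ A ω}` form an interval of `ℝ`. If `p* = p 0 ω` lies in `S`, then
`p_min = p*`; otherwise `p*` lies outside `S` and the nearest point `p_min` of `S` lies between `p*`
and every point of `S`. Either way, on `{θ ∈ A}` the point `p_min` lies between `p(θ)` and `p*`, so
it is at least as close to `p(θ)` as `p*` is.
-/

section NearestPoint

variable {α : Type*} [AddCommGroup α] [LinearOrder α] [IsOrderedAddMonoid α]

theorem mem_uIcc_of_abs_sub_le_of_notMem_uIcc {a m t : α} (ha : a ∉ uIcc m t)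
    (hmt : |a - m| ≤ |a - t|) : m ∈ uIcc t a := by
  rcases le_total a m with ham | hma <;> rcases le_total a t with hat | hta
  · rw [abs_sub_comm, abs_of_nonneg (sub_nonneg.2 ham), abs_sub_comm,
      abs_of_nonneg (sub_nonneg.2 hat), sub_le_sub_iff_right] at hmt
    exact mem_uIcc_of_ge ham hmt
  · exact absurd (mem_uIcc_of_ge hta ham) ha
  · exact absurd (mem_uIcc_of_le hma hat) ha
  · rw [abs_of_nonneg (sub_nonneg.2 hma), abs_of_nonneg (sub_nonneg.2 hta),
      sub_le_sub_iff_left] at hmt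
    exact mem_uIcc_of_le hmt hma

theorem Set.OrdConnected.mem_uIcc_of_forall_abs_sub_le {S : Set α} (hS : S.OrdConnected)
    {a m t : α} (hm : m ∈ S) (ht : t ∈ S) (hmin : ∀ x ∈ S, |a - m| ≤ |a - x|) :
    m ∈ uIcc t a := by
  by_cases ha : a ∈ uIcc m t
  · have ham : a = m := sub_eq_zero.mp <| abs_nonpos_iff.mp <| by
      simpa using hmin a (hS.uIcc_subset hm ht ha)
    exact ham ▸ right_mem_uIcc
  · exact mem_uIcc_of_abs_sub_le_of_notMem_uIcc ha (hmin t ht)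

end NearestPoint

theorem minimally_adjusted_event_inclusion_general
    {Ω : Type*} [MeasurableSpace Ω] (P : Measure Ω)
    {Θ : Type*} [Zero Θ] (p : Θ → Ω → ℝ)
    (A : Ω → Set Θ) (θ : Θ)
    (hSconn : ∀ ω, IsPathConnected ((fun θ₀ => p θ₀ ω) '' A ω))
    (pmin : Ω → ℝ)
    (hpminMem : ∀ ω, pmin ω ∈ (fun θ₀ => p θ₀ ω) '' A ω)
    (hpminOpt : ∀ ω, ∀ x ∈ (fun θ₀ => p θ₀ ω) '' A ω,
      |p 0 ω - pmin ω| ≤ |p 0 ω - x|) :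
    {ω | θ ∈ A ω} ⊆ {ω | |pmin ω - p θ ω| ≤ |p 0 ω - p θ ω|} ∧
      P {ω | θ ∈ A ω} ≤ P {ω | |pmin ω - p θ ω| ≤ |p 0 ω - p θ ω|} := by
  have hsub : {ω | θ ∈ A ω} ⊆ {ω | |pmin ω - p θ ω| ≤ |p 0 ω - p θ ω|} := fun ω hθ =>
    abs_sub_left_of_mem_uIcc <|
      (hSconn ω).isConnected.isPreconnected.ordConnected.mem_uIcc_of_forall_abs_sub_le
        (hpminMem ω) (mem_image_of_mem _ hθ) (hpminOpt ω)
  exact ⟨hsub, measure_mono hsub⟩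

/-- **Finite-sample guarantee for the minimally adjusted p-value.**
If for every `ω` the set of p-values `{p θ₀ ω : θ₀ ∈ A ω}` is nonempty, closed and
pathwise-connected, and `pmin ω` is a point of this set minimizing the distance to the
unadjusted p-value `p 0 ω`, then the event `{θ ∈ A}` is contained in the event
`{|pmin - p θ| ≤ |p 0 - p θ|}`, and hence
`P(|pmin - p θ| ≤ |p 0 - p θ|) ≥ P(θ ∈ A)`. -/
theorem minimally_adjusted_event_inclusion
    {Ω : Type*} [MeasurableSpace Ω] (P : Measure Ω) [IsProbabilityMeasure P]
    {Θ : Type*} [Zero Θ] (p : Θ → Ω → ℝ) (hp01 : ∀ θ₀ ω, p θ₀ ω ∈ Icc (0 : ℝ) 1)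
    (A : Ω → Set Θ) (θ : Θ)
    (hSne : ∀ ω, ((fun θ₀ => p θ₀ ω) '' A ω).Nonempty)
    (hSclosed : ∀ ω, IsClosed ((fun θ₀ => p θ₀ ω) '' A ω))
    (hSconn : ∀ ω, IsPathConnected ((fun θ₀ => p θ₀ ω) '' A ω))
    (pmin : Ω → ℝ)
    (hpminMem : ∀ ω, pmin ω ∈ (fun θ₀ => p θ₀ ω) '' A ω)
    (hpminOpt : ∀ ω, ∀ x ∈ (fun θ₀ => p θ₀ ω) '' A ω,
      |p 0 ω - pmin ω| ≤ |p 0 ω - x|) :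
    {ω | θ ∈ A ω} ⊆ {ω | |pmin ω - p θ ω| ≤ |p 0 ω - p θ ω|} ∧
      P {ω | θ ∈ A ω} ≤ P {ω | |pmin ω - p θ ω| ≤ |p 0 ω - p θ ω|} :=
  minimally_adjusted_event_inclusion_general P p A θ hSconn pmin hpminMem hpminOpt
end
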